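/- Let L be a subalgebra of a (right) Leibniz algebra Q over a field F. Then Q is an algebra of quotients of L if and only if Q is ideally absorbed into L. -/
import Mathlib


namespace LeibnizQuot

variable {F : Type*} [Field F] {Q : Type*} [AddCommGroup Q] [Module F Q]

/-- The right Leibniz identity `[x,[y,z]] = [[x,y],z] - [[x,z],y]`. -/
def IsRightLeibniz (b : Q →ₗ[F] Q →ₗ[F] Q) : Prop :=
  ∀ x y z : Q, b x (b y z) = b (b x y) z - b (b x z) y

/-- The left Leibniz identity `[x,[y,z]] = [[x,y],z] + [y,[x,z]]`. -/
def IsLeftLeibniz (b : Q →ₗ[F] Q →ₗ[F] Q) : Prop :=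
  ∀ x y z : Q, b x (b y z) = b (b x y) z + b y (b x z)

/-- `I` is an ideal of the whole Leibniz algebra: `[I,L] ⊆ I` and `[L,I] ⊆ I`. -/
def IsIdeal (b : Q →ₗ[F] Q →ₗ[F] Q) (I : Submodule F Q) : Prop :=
  ∀ x ∈ I, ∀ y : Q, b x y ∈ I ∧ b y x ∈ I

/-- Left annihilator of a subset. -/
def lanSet (b : Q →ₗ[F] Q →ₗ[F] Q) (S : Set Q) : Set Q := {x : Q | ∀ h ∈ S, b x h = 0}

/-- Right annihilator of a subset. -/
def ranSet (b : Q →ₗ[F] Q →ₗ[F] Q) (S : Set Q) : Set Q := {x : Q | ∀ h ∈ S, b h x = 0}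

/-- Annihilator of a subset. -/
def annSet (b : Q →ₗ[F] Q →ₗ[F] Q) (S : Set Q) : Set Q := lanSet b S ∩ ranSet b S

/-- The algebra is semiprime: `[I,I] ≠ {0}` for every nonzero ideal `I`. -/
def IsSemiprime (b : Q →ₗ[F] Q →ₗ[F] Q) : Prop :=
  ∀ I : Submodule F Q, IsIdeal b I → I ≠ ⊥ → ∃ x ∈ I, ∃ y ∈ I, b x y ≠ 0

/-- The algebra is prime: `[I,J] ≠ {0}` for all nonzero ideals `I`, `J`. -/
def IsPrime (b : Q →ₗ[F] Q →ₗ[F] Q) : Prop :=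
  ∀ I J : Submodule F Q, IsIdeal b I → IsIdeal b J → I ≠ ⊥ → J ≠ ⊥ →
    ∃ x ∈ I, ∃ y ∈ J, b x y ≠ 0

/-- An ideal is essential if it meets every nonzero ideal nontrivially. -/
def IsEssential (b : Q →ₗ[F] Q →ₗ[F] Q) (I : Submodule F Q) : Prop :=
  IsIdeal b I ∧ ∀ J : Submodule F Q, IsIdeal b J → J ≠ ⊥ → I ⊓ J ≠ ⊥

/-- `L` is a subalgebra of the ambient Leibniz algebra. -/
def IsSubalgebraOf (b : Q →ₗ[F] Q →ₗ[F] Q) (L : Submodule F Q) : Prop :=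
  ∀ x ∈ L, ∀ y ∈ L, b x y ∈ L

/-- `I` is an ideal of the subalgebra `L`. -/
def IsIdealOf (b : Q →ₗ[F] Q →ₗ[F] Q) (L I : Submodule F Q) : Prop :=
  I ≤ L ∧ ∀ x ∈ I, ∀ y ∈ L, b x y ∈ I ∧ b y x ∈ I

/-- `I` is an essential ideal of the subalgebra `L`. -/
def IsEssentialIdealOf (b : Q →ₗ[F] Q →ₗ[F] Q) (L I : Submodule F Q) : Prop :=
  IsIdealOf b L I ∧ ∀ J : Submodule F Q, IsIdealOf b L J → J ≠ ⊥ → I ⊓ J ≠ ⊥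

/-- The subalgebra `L` is semiprime. -/
def IsSemiprimeSub (b : Q →ₗ[F] Q →ₗ[F] Q) (L : Submodule F Q) : Prop :=
  ∀ I : Submodule F Q, IsIdealOf b L I → I ≠ ⊥ → ∃ x ∈ I, ∃ y ∈ I, b x y ≠ 0

/-- The subalgebra `L` is prime. -/
def IsPrimeSub (b : Q →ₗ[F] Q →ₗ[F] Q) (L : Submodule F Q) : Prop :=
  ∀ I J : Submodule F Q, IsIdealOf b L I → IsIdealOf b L J → I ≠ ⊥ → J ≠ ⊥ →
    ∃ x ∈ I, ∃ y ∈ J, b x y ≠ 0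

/-- Left annihilator of `S` inside the subalgebra `L`. -/
def lanIn (b : Q →ₗ[F] Q →ₗ[F] Q) (L : Submodule F Q) (S : Set Q) : Set Q :=
  {x : Q | x ∈ L ∧ ∀ s ∈ S, b x s = 0}

/-- Right annihilator of `S` inside the subalgebra `L`. -/
def ranIn (b : Q →ₗ[F] Q →ₗ[F] Q) (L : Submodule F Q) (S : Set Q) : Set Q :=
  {x : Q | x ∈ L ∧ ∀ s ∈ S, b s x = 0}

/-- Annihilator of `S` inside the subalgebra `L`. -/
def annIn (b : Q →ₗ[F] Q →ₗ[F] Q) (L : Submodule F Q) (S : Set Q) : Set Q :=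
  lanIn b L S ∩ ranIn b L S

/-- The right and left multiplication operators `R_x : p ↦ [p,x]` and `L_y : p ↦ [y,p]`
with `x, y ∈ S`. -/
def mulOps (b : Q →ₗ[F] Q →ₗ[F] Q) (S : Set Q) : Set (Module.End F Q) :=
  {f : Module.End F Q | ∃ x ∈ S, f = b.flip x ∨ f = b x}

/-- The set `_L(q)`: the linear span of `q` together with all `ξ(q)`, where `ξ` lies in the
associative algebra of endomorphisms generated by multiplication operators by elements of `L`. -/
def LqSet (b : Q →ₗ[F] Q →ₗ[F] Q) (L : Submodule F Q) (q : Q) : Set Q :=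
  {p : Q | ∃ ξ ∈ Algebra.adjoin F (mulOps b (L : Set Q)), ξ q = p}

/-- The set `(L : q) = {x ∈ L : [x, _L(q)] ⊆ L and [_L(q), x] ⊆ L}`. -/
def LcolonSet (b : Q →ₗ[F] Q →ₗ[F] Q) (L : Submodule F Q) (q : Q) : Set Q :=
  {x : Q | x ∈ L ∧ ∀ p ∈ LqSet b L q, b x p ∈ L ∧ b p x ∈ L}

/-- The ambient algebra is an algebra of quotients of the subalgebra `L`. -/
def IsAlgebraOfQuotients (b : Q →ₗ[F] Q →ₗ[F] Q) (L : Submodule F Q) : Prop :=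
  ∀ p q : Q, p ≠ 0 →
    (∃ x ∈ LcolonSet b L q, b x p ≠ 0) ∨ (∃ y ∈ LcolonSet b L q, b p y ≠ 0)

/-- The ambient algebra is a weak algebra of quotients of the subalgebra `L`. -/
def IsWeakAlgebraOfQuotients (b : Q →ₗ[F] Q →ₗ[F] Q) (L : Submodule F Q) : Prop :=
  ∀ q : Q, q ≠ 0 →
    (∃ x ∈ L, b q x ≠ 0 ∧ b q x ∈ L) ∨ (∃ y ∈ L, b y q ≠ 0 ∧ b y q ∈ L)

/-- The ambient algebra is ideally absorbed into the subalgebra `L`. -/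
def IsIdeallyAbsorbed (b : Q →ₗ[F] Q →ₗ[F] Q) (L : Submodule F Q) : Prop :=
  ∀ q : Q, q ≠ 0 → ∃ I : Submodule F Q, IsIdealOf b L I ∧
    annIn b L (I : Set Q) = {0} ∧
    ((∃ x ∈ I, b x q ≠ 0) ∨ (∃ x ∈ I, b q x ≠ 0)) ∧
    (∀ x ∈ I, b x q ∈ L ∧ b q x ∈ L)

/-- The span of `[I,I]` (more generally, of `[I,J]`). -/
def bracketSpan (b : Q →ₗ[F] Q →ₗ[F] Q) (I J : Submodule F Q) : Submodule F Q :=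
  Submodule.span F {z : Q | ∃ x ∈ I, ∃ y ∈ J, z = b x y}

/-- `Fam` is a power filter of (nonzero) sturdy ideals of the subalgebra `L`. -/
def IsPowerFilterOfSturdyIdeals (b : Q →ₗ[F] Q →ₗ[F] Q) (L : Submodule F Q)
    (Fam : Set (Submodule F Q)) : Prop :=
  Fam.Nonempty ∧
  (∀ I ∈ Fam, IsIdealOf b L I ∧ I ≠ ⊥ ∧ annIn b L (I : Set Q) = {0}) ∧
  (∀ I₁ ∈ Fam, ∀ I₂ ∈ Fam, ∃ I ∈ Fam, I ≤ I₁ ⊓ I₂) ∧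
  (∀ I ∈ Fam, ∃ K ∈ Fam, K ≤ bracketSpan b I I)

/-- The ambient algebra is a Leibniz algebra of Martindale-like quotients of `L`
with respect to the family `Fam`. -/
def IsMartindaleQuotients (b : Q →ₗ[F] Q →ₗ[F] Q) (L : Submodule F Q)
    (Fam : Set (Submodule F Q)) : Prop :=
  ∀ q : Q, q ≠ 0 → ∃ I ∈ Fam,
    ((∃ x ∈ I, b q x ≠ 0) ∨ (∃ x ∈ I, b x q ≠ 0)) ∧
    (∀ x ∈ I, b q x ∈ L ∧ b x q ∈ L)


section Aux

variable {F : Type*} [Field F] {Q : Type*} [AddCommGroup Q] [Module F Q]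

lemma mem_LqSet_self (b : Q →ₗ[F] Q →ₗ[F] Q) (L : Submodule F Q) (q : Q) :
    q ∈ LqSet b L q := ⟨1, Subalgebra.one_mem _, rfl⟩

lemma LqSet_brr {b : Q →ₗ[F] Q →ₗ[F] Q} {L : Submodule F Q} {q p y : Q}
    (hp : p ∈ LqSet b L q) (hy : y ∈ L) : b p y ∈ LqSet b L q := by
  obtain ⟨ξ, hξ, rfl⟩ := hp
  exact ⟨b.flip y * ξ, mul_mem (Algebra.subset_adjoin ⟨y, hy, Or.inl rfl⟩) hξ, rfl⟩

lemma LqSet_brl {b : Q →ₗ[F] Q →ₗ[F] Q} {L : Submodule F Q} {q p y : Q}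
    (hp : p ∈ LqSet b L q) (hy : y ∈ L) : b y p ∈ LqSet b L q := by
  obtain ⟨ξ, hξ, rfl⟩ := hp
  exact ⟨b y * ξ, mul_mem (Algebra.subset_adjoin ⟨y, hy, Or.inr rfl⟩) hξ, rfl⟩

/-- `(L : q)` as a submodule. -/
def LcolonSub (b : Q →ₗ[F] Q →ₗ[F] Q) (L : Submodule F Q) (q : Q) : Submodule F Q where
  carrier := LcolonSet b L q
  zero_mem' := ⟨L.zero_mem, fun p _ => by simp⟩
  add_mem' := by
    rintro x y ⟨hxL, hx⟩ ⟨hyL, hy⟩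
    refine ⟨L.add_mem hxL hyL, fun p hp => ?_⟩
    constructor
    · simpa [map_add] using L.add_mem (hx p hp).1 (hy p hp).1
    · simpa [map_add] using L.add_mem (hx p hp).2 (hy p hp).2
  smul_mem' := by
    rintro c x ⟨hxL, hx⟩
    refine ⟨L.smul_mem c hxL, fun p hp => ?_⟩
    constructor
    · simpa [map_smul] using L.smul_mem c (hx p hp).1
    · simpa [map_smul] using L.smul_mem c (hx p hp).2

lemma mem_LcolonSub {b : Q →ₗ[F] Q →ₗ[F] Q} {L : Submodule F Q} {q x : Q} :
    x ∈ LcolonSub b L q ↔ x ∈ LcolonSet b L q := Iff.rfl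

lemma LcolonSub_ideal {b : Q →ₗ[F] Q →ₗ[F] Q} (hb : IsRightLeibniz b)
    {L : Submodule F Q} (hL : IsSubalgebraOf b L) (q : Q) :
    IsIdealOf b L (LcolonSub b L q) := by
  refine ⟨fun x hx => hx.1, ?_⟩
  rintro x ⟨hxL, hx2⟩ y hyL
  constructor
  · refine ⟨hL x hxL y hyL, fun p hp => ⟨?_, ?_⟩⟩
    · rw [eq_add_of_sub_eq (hb x y p).symm]
      exact add_mem (hx2 _ (LqSet_brl hp hyL)).1 (hL _ (hx2 p hp).1 y hyL)
    · rw [hb p x y]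
      exact sub_mem (hL _ (hx2 p hp).2 y hyL) (hx2 _ (LqSet_brr hp hyL)).2
  · refine ⟨hL y hyL x hxL, fun p hp => ⟨?_, ?_⟩⟩
    · rw [eq_add_of_sub_eq (hb y x p).symm]
      exact add_mem (hL y hyL _ (hx2 p hp).1) (hx2 _ (LqSet_brl hp hyL)).2
    · rw [hb p y x]
      exact sub_mem (hx2 _ (LqSet_brr hp hyL)).2 (hL _ (hx2 p hp).2 y hyL)

/-- If the ideal `I` absorbs `q`, then it absorbs all of `_L(q)`. -/
lemma colon_of_absorb {b : Q →ₗ[F] Q →ₗ[F] Q} (hb : IsRightLeibniz b)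
    {L : Submodule F Q} (hL : IsSubalgebraOf b L) {I : Submodule F Q}
    (hI : IsIdealOf b L I) {q : Q} (habs : ∀ x ∈ I, b x q ∈ L ∧ b q x ∈ L) :
    ∀ x ∈ I, ∀ r ∈ LqSet b L q, b x r ∈ L ∧ b r x ∈ L := by
  have key : ∀ ξ ∈ Algebra.adjoin F (mulOps b (L : Set Q)),
      ∀ p : Q, (∀ x ∈ I, b x p ∈ L ∧ b p x ∈ L) →
        ∀ x ∈ I, b x (ξ p) ∈ L ∧ b (ξ p) x ∈ L := by
    intro ξ hξ
    induction hξ using Algebra.adjoin_induction with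
    | mem f hf =>
      obtain ⟨y, hyL, hf | hf⟩ := hf <;> subst hf <;> intro p hp x hxI
      · -- f p = b p y
        refine ⟨?_, ?_⟩
        · show b x (b p y) ∈ L
          rw [hb x p y]
          exact sub_mem (hL _ (hp x hxI).1 y hyL) (hp _ (hI.2 x hxI y hyL).1).1
        · show b (b p y) x ∈ L
          rw [eq_add_of_sub_eq (hb p y x).symm]
          exact add_mem (hp _ (hI.2 x hxI y hyL).2).2 (hL _ (hp x hxI).2 y hyL)
      · -- f p = b y p
        refine ⟨?_, ?_⟩
        · show b x (b y p) ∈ L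
          rw [hb x y p]
          exact sub_mem (hp _ (hI.2 x hxI y hyL).1).1 (hL _ (hp x hxI).1 y hyL)
        · show b (b y p) x ∈ L
          rw [eq_add_of_sub_eq (hb y p x).symm]
          exact add_mem (hL y hyL _ (hp x hxI).2) (hp _ (hI.2 x hxI y hyL).2).1
    | algebraMap r =>
      intro p hp x hxI
      refine ⟨?_, ?_⟩
      · show b x ((algebraMap F (Module.End F Q) r) p) ∈ L
        simpa [Module.algebraMap_end_apply, map_smul] using L.smul_mem r (hp x hxI).1
      · show b ((algebraMap F (Module.End F Q) r) p) x ∈ L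
        simpa [Module.algebraMap_end_apply, map_smul] using L.smul_mem r (hp x hxI).2
    | add ξ η _ _ ihξ ihη =>
      intro p hp x hxI
      refine ⟨?_, ?_⟩
      · show b x ((ξ + η) p) ∈ L
        simpa [LinearMap.add_apply, map_add] using
          L.add_mem (ihξ p hp x hxI).1 (ihη p hp x hxI).1
      · show b ((ξ + η) p) x ∈ L
        simpa [LinearMap.add_apply, map_add] using
          L.add_mem (ihξ p hp x hxI).2 (ihη p hp x hxI).2
    | mul ξ η _ _ ihξ ihη =>
      intro p hp
      exact ihξ (η p) (ihη p hp)
  rintro x hx r ⟨ξ, hξ, rfl⟩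
  exact key ξ hξ q habs x hx

end Aux


/-- For a subalgebra `L` of a right Leibniz algebra `Q`, `Q` is an algebra
of quotients of `L` if and only if `Q` is ideally absorbed into `L`. -/
theorem quotients_iff_ideallyAbsorbed {F : Type*} [Field F] {Q : Type*} [AddCommGroup Q]
    [Module F Q] (b : Q →ₗ[F] Q →ₗ[F] Q) (hb : IsRightLeibniz b)
    (L : Submodule F Q) (hL : IsSubalgebraOf b L) :
    IsAlgebraOfQuotients b L ↔ IsIdeallyAbsorbed b L := by
  constructor
  · -- quotients → ideally absorbed
    intro hquot q hq
    refine ⟨LcolonSub b L q, LcolonSub_ideal hb hL q, ?_, ?_, ?_⟩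
    · ext x
      simp only [Set.mem_singleton_iff]
      constructor
      · rintro ⟨⟨hxL, hlan⟩, _, hran⟩
        by_contra hx
        rcases hquot x q hx with ⟨y, hy, hne⟩ | ⟨y, hy, hne⟩
        · exact hne (hran y hy)
        · exact hne (hlan y hy)
      · rintro rfl
        exact ⟨⟨L.zero_mem, fun s _ => by simp⟩, L.zero_mem, fun s _ => by simp⟩
    · rcases hquot q q hq with ⟨x, hx, h⟩ | ⟨x, hx, h⟩
      · exact Or.inl ⟨x, hx, h⟩
      · exact Or.inr ⟨x, hx, h⟩
    · intro x hx
      exact hx.2 q (mem_LqSet_self b L q)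
  · -- ideally absorbed → quotients
    intro habs p q hp
    obtain ⟨K, hKid, hKann, hKsub⟩ :
        ∃ K : Submodule F Q, IsIdealOf b L K ∧ annIn b L (K : Set Q) = {0} ∧
          ∀ x ∈ K, ∀ r ∈ LqSet b L q, b x r ∈ L ∧ b r x ∈ L := by
      by_cases hq : q = 0
      · refine ⟨L, ⟨le_rfl, fun x hx y hy => ⟨hL x hx y hy, hL y hy x hx⟩⟩, ?_, ?_⟩
        · ext x
          simp only [Set.mem_singleton_iff]
          constructor
          · rintro ⟨⟨hxL, hlan⟩, _, hran⟩
            by_contra hx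
            obtain ⟨I, hIid, _, hbr, _⟩ := habs x hx
            rcases hbr with ⟨y, hyI, hne⟩ | ⟨y, hyI, hne⟩
            · exact hne (hran y (hIid.1 hyI))
            · exact hne (hlan y (hIid.1 hyI))
          · rintro rfl
            exact ⟨⟨L.zero_mem, fun s _ => by simp⟩, L.zero_mem, fun s _ => by simp⟩
        · subst hq
          rintro x hx r ⟨ξ, -, rfl⟩
          simp only [map_zero]
          exact ⟨by simp, by simp⟩
      · obtain ⟨I, hIid, hIann, -, habsI⟩ := habs q hq
        exact ⟨I, hIid, hIann, colon_of_absorb hb hL hIid habsI⟩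
    obtain ⟨J, hJid, -, hbr, habsJ⟩ := habs p hp
    by_contra hcon
    push_neg at hcon
    obtain ⟨h1, h2⟩ := hcon
    have hKmem : ∀ k ∈ K, k ∈ LcolonSet b L q :=
      fun k hk => ⟨hKid.1 hk, hKsub k hk⟩
    have hKp : ∀ k ∈ K, b k p = 0 := fun k hk => h1 k (hKmem k hk)
    have hpK : ∀ k ∈ K, b p k = 0 := fun k hk => h2 k (hKmem k hk)
    have hKsplit : ∀ u : Q, u ∈ L → u ≠ 0 → ∃ k ∈ K, b u k ≠ 0 ∨ b k u ≠ 0 := by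
      intro u huL hune
      by_contra h
      push_neg at h
      have : u ∈ annIn b L (K : Set Q) :=
        ⟨⟨huL, fun s hs => (h s hs).1⟩, huL, fun s hs => (h s hs).2⟩
      rw [hKann] at this
      exact hune this
    rcases hbr with ⟨y, hyJ, hne⟩ | ⟨y, hyJ, hne⟩
    · -- u = [y,p] ≠ 0
      have hyL : y ∈ L := hJid.1 hyJ
      obtain ⟨k, hkK, h' | h'⟩ := hKsplit (b y p) (habsJ y hyJ).1 hne
      · have hyk : b y k ∈ K := (hKid.2 k hkK y hyL).2
        have e := hb y p k
        rw [hpK k hkK, map_zero] at e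
        exact h' ((sub_eq_zero.mp e.symm).trans (hKp _ hyk))
      · have hky : b k y ∈ K := (hKid.2 k hkK y hyL).1
        have e := hb k y p
        rw [hKp k hkK, map_zero, LinearMap.zero_apply, sub_zero] at e
        exact h' (e.trans (hKp _ hky))
    · -- u = [p,y] ≠ 0
      have hyL : y ∈ L := hJid.1 hyJ
      obtain ⟨k, hkK, h' | h'⟩ := hKsplit (b p y) (habsJ y hyJ).2 hne
      · have hyk : b y k ∈ K := (hKid.2 k hkK y hyL).2
        have e := hb p y k
        rw [hpK _ hyk, hpK k hkK, map_zero, LinearMap.zero_apply, sub_zero] at e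
        exact h' e.symm
      · have hky : b k y ∈ K := (hKid.2 k hkK y hyL).1
        have e := hb k p y
        rw [hKp k hkK, hKp _ hky, map_zero, LinearMap.zero_apply, sub_zero] at e
        exact h' e


end LeibnizQuot
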